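/- arXiv:2209.01468 — 2 statements merged into one kernel-verified Lean document; each statement's English description precedes it below -/
import Mathlib

section
/- Let μ be a probability measure on ℝ with μ((0,∞)) = 1, let M(t) = ∫ exp(t·ε) dμ(ε), and let γ > 0 and Δq > 0 be such that M(Δq) < ∞. Then M(−γ) ≥ (M(Δq))^{−γ/Δq}. Equivalently, the usefulness 1 − M(−γ) of a Randomized DP Laplace mechanism whose privacy budget is set to ε₀ = ln ∫ exp(Δq·ε) dμ(ε) (the logarithm of the average of e^{ε(b)} where ε(b) = Δq·ε are the per-parameter privacy leakages) is upper bounded by the usefulness 1 − exp(−γ·ε₀/Δq) of the baseline ε₀-differentially private Laplace mechanism with scale Δq/ε₀. -/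
/-!
With `q = -γ/Δq ≤ 0`, the map `x ↦ x ^ q` is convex on `(0, ∞)`, and
`exp (Δq ε) ^ q = exp (-γ ε)`. Jensen's inequality for the random variable `exp (Δq ε)`,
which is `≥ 1` since `ε > 0` a.s., gives `M(Δq) ^ q ≤ M(-γ)`.
-/

open MeasureTheory Real Set

theorem convexOn_rpow_of_nonpos {p : ℝ} (hp : p ≤ 0) :
    ConvexOn ℝ (Ioi 0) fun x : ℝ ↦ x ^ p := by
  refine convexOn_of_hasDerivWithinAt2_nonneg (convex_Ioi 0)
    (f' := fun x ↦ p * x ^ (p - 1)) (f'' := fun x ↦ p * ((p - 1) * x ^ (p - 1 - 1))) ?_ ?_ ?_ ?_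
  · exact fun x hx ↦ (continuousAt_rpow_const x p (Or.inl (ne_of_gt hx))).continuousWithinAt
  all_goals intro x hx; rw [interior_Ioi] at hx
  · exact (hasDerivAt_rpow_const (Or.inl (ne_of_gt hx))).hasDerivWithinAt
  · exact ((hasDerivAt_rpow_const (Or.inl (ne_of_gt hx))).const_mul p).hasDerivWithinAt
  · have hpow : 0 < x ^ (p - 1 - 1) := rpow_pos_of_pos hx _
    exact mul_nonneg_of_nonpos_of_nonpos hp (mul_nonpos_of_nonpos_of_nonneg (by linarith) hpow.le)

/-- `c ≤ f` keeps `f` in a closed subset of `(0, ∞)`, as `ConvexOn.map_integral_le` requires. -/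
theorem rpow_integral_le_integral_rpow_of_nonpos {α : Type*} [MeasurableSpace α] {μ : Measure α}
    [IsProbabilityMeasure μ] {f : α → ℝ} {p c : ℝ} (hp : p ≤ 0) (hc : 0 < c)
    (hfc : ∀ᵐ x ∂μ, c ≤ f x) (hf : Integrable f μ) (hfp : Integrable (fun x ↦ f x ^ p) μ) :
    (∫ x, f x ∂μ) ^ p ≤ ∫ x, f x ^ p ∂μ := by
  have hsub : Ici c ⊆ Ioi 0 := Ici_subset_Ioi.mpr hc
  exact ((convexOn_rpow_of_nonpos hp).subset hsub (convex_Ici c)).map_integral_le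
    (fun x hx ↦ (continuousAt_rpow_const x p (Or.inl (ne_of_gt (hsub hx)))).continuousWithinAt)
    isClosed_Ici hfc hf hfp

theorem integrable_exp_mul_of_nonpos {μ : Measure ℝ} [IsFiniteMeasure μ] {t : ℝ} (ht : t ≤ 0)
    (hμ : ∀ᵐ ε ∂μ, 0 ≤ ε) : Integrable (fun ε ↦ exp (t * ε)) μ := by
  refine (integrable_const 1).mono' (by fun_prop) ?_
  filter_upwards [hμ] with ε hε
  rw [norm_of_nonneg (exp_pos _).le, exp_le_one_iff]
  exact mul_nonpos_of_nonpos_of_nonneg ht hε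

/-- If the privacy budget of a Randomized DP Laplace mechanism is set to
`ε₀ = ln ∫ exp(Δq·ε) dμ(ε)` (the log-average of the per-parameter privacy leakages
`e^{Δq·ε}`), then its usefulness `1 − M(−γ)` is upper bounded by the usefulness
`1 − exp(−γ·ε₀/Δq) = 1 − (M(Δq))^{−γ/Δq}` of the baseline `ε₀`-DP Laplace mechanism;
equivalently `M(−γ) ≥ (M(Δq))^{−γ/Δq}`. -/
theorem mixture_laplace_mgf_lower_bound
    (μ : Measure ℝ) [IsProbabilityMeasure μ] (hμ : μ (Set.Ioi 0) = 1)
    (M : ℝ → ℝ)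
    (hM : ∀ t : ℝ, M t = ∫ ε, Real.exp (t * ε) ∂μ)
    (γ Δq : ℝ) (hγ : 0 < γ) (hΔq : 0 < Δq)
    (hMfin : Integrable (fun ε : ℝ => Real.exp (Δq * ε)) μ) :
    M Δq ^ (-(γ / Δq)) ≤ M (-γ) := by
  have hpos : ∀ᵐ ε ∂μ, ε ∈ Ioi 0 := by
    rwa [ae_mem_iff_measure_eq measurableSet_Ioi.nullMeasurableSet, measure_univ]
  have hexp_ge : ∀ᵐ ε ∂μ, 1 ≤ exp (Δq * ε) := by
    filter_upwards [hpos] with ε hε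
    exact one_le_exp (mul_pos hΔq hε).le
  have hpow : ∀ ε, exp (Δq * ε) ^ (-(γ / Δq)) = exp (-γ * ε) := fun ε ↦ by
    rw [← exp_mul]; congr 1; field_simp
  have hint : Integrable (fun ε ↦ exp (-γ * ε)) μ :=
    integrable_exp_mul_of_nonpos (by linarith) (hpos.mono fun _ h ↦ le_of_lt h)
  rw [hM, hM]
  simp_rw [← hpow] at hint ⊢
  exact rpow_integral_le_integral_rpow_of_nonpos (neg_nonpos.mpr (div_pos hγ hΔq).le) one_pos
    hexp_ge hMfin hint
end

section
/- Let X₁, …, Xₙ be independent random variables on a probability space, each almost surely positive, let a₁, …, aₙ > 0, let Y = ∑_{i=1}^n aᵢ·Xᵢ, let μ be the law of Y, and let g(x) = ∫ (ε/2)·exp(−ε·|x|) dμ(ε). Then for every γ > 0 the usefulness of the mixture Laplace mechanism driven by μ satisfies ∫_{−γ}^{γ} g(x) dx = 1 − ∏_{i=1}^n M_{Xᵢ}(−aᵢ·γ), where M_{Xᵢ}(t) = E[exp(t·Xᵢ)]. -/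
/-!
Integrating the Laplace density `ε/2 · exp (-ε|x|)` over `[-γ, γ]` gives `1 - exp (-γε)`.
Since the mixing law is carried by `ε ≥ 0`, Fubini applies, so the usefulness of the mixture is
`1 - E[exp (-γY)] = 1 - M_Y(-γ)`, and the mgf of `Y = ∑ aᵢXᵢ` factorises over the independent
summands.
-/

open MeasureTheory Real ProbabilityTheory

lemma integral_Icc_laplace_density (ε : ℝ) {γ : ℝ} (hγ : 0 ≤ γ) :
    ∫ x in Set.Icc (-γ) γ, ε / 2 * exp (-(ε * |x|)) = 1 - exp (-γ * ε) := by
  set f : ℝ → ℝ := fun x ↦ ε / 2 * exp (-(ε * |x|))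
  have hf : Continuous f := by fun_prop
  have half : ∫ x in (0 : ℝ)..γ, f x = (1 - exp (-γ * ε)) / 2 := by
    have hderiv : ∀ x ∈ Set.uIcc 0 γ,
        HasDerivAt (fun y ↦ -exp (-(ε * y)) / 2) (f x) x := by
      intro x hx
      rw [Set.uIcc_of_le hγ] at hx
      refine ((((hasDerivAt_id x).const_mul ε).neg.exp.neg).div_const 2).congr_deriv ?_
      simp only [f, abs_of_nonneg hx.1, id_eq, Pi.neg_apply]
      ring
    rw [intervalIntegral.integral_eq_sub_of_hasDerivAt hderiv (hf.intervalIntegrable _ _)]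
    simp only [mul_zero, neg_zero, exp_zero, neg_mul, mul_comm γ]
    ring
  have hsymm : ∫ x in -γ..0, f x = ∫ x in (0 : ℝ)..γ, f x := by
    simpa [f, abs_neg] using (intervalIntegral.integral_comp_neg (a := 0) (b := γ) f).symm
  rw [integral_Icc_eq_integral_Ioc, ← intervalIntegral.integral_of_le (by linarith),
    ← intervalIntegral.integral_add_adjacent_intervals (hf.intervalIntegrable _ 0)
      (hf.intervalIntegrable 0 _), hsymm, half]
  ring

noncomputable def mixtureLaplaceDensity (μ : Measure ℝ) (x : ℝ) : ℝ :=
  ∫ ε, ε / 2 * exp (-(ε * |x|)) ∂μ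

section Mixture

variable {μ : Measure ℝ} {γ : ℝ}

lemma integrable_exp_neg_mul_of_ae_nonneg [IsFiniteMeasure μ] (hμ : ∀ᵐ ε ∂μ, 0 ≤ ε)
    (hγ : 0 ≤ γ) : Integrable (fun ε ↦ exp (-γ * ε)) μ := by
  refine (integrable_const 1).mono' (by fun_prop) ?_
  filter_upwards [hμ] with ε hε
  rw [norm_of_nonneg (exp_nonneg _), exp_le_one_iff]
  nlinarith

lemma integrable_laplace_density_prod [IsFiniteMeasure μ] (hμ : ∀ᵐ ε ∂μ, 0 ≤ ε) (hγ : 0 ≤ γ) :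
    Integrable (Function.uncurry fun x ε : ℝ ↦ ε / 2 * exp (-(ε * |x|)))
      ((volume.restrict (Set.Icc (-γ) γ)).prod μ) := by
  have hcont : Continuous (Function.uncurry fun x ε : ℝ ↦ ε / 2 * exp (-(ε * |x|))) := by
    fun_prop
  refine (integrable_prod_iff' hcont.aestronglyMeasurable).2
    ⟨.of_forall fun ε ↦ (by fun_prop : Continuous _).integrableOn_Icc, ?_⟩
  refine ((integrable_const 1).sub (integrable_exp_neg_mul_of_ae_nonneg hμ hγ)).congr ?_
  filter_upwards [hμ] with ε hε
  rw [Pi.sub_apply, ← integral_Icc_laplace_density ε hγ]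
  refine integral_congr_ae (.of_forall fun x ↦ ?_)
  simp only [Function.uncurry_apply_pair]
  rw [norm_of_nonneg (by positivity)]

theorem integral_Icc_mixtureLaplaceDensity [IsProbabilityMeasure μ] (hμ : ∀ᵐ ε ∂μ, 0 ≤ ε)
    (hγ : 0 ≤ γ) :
    ∫ x in Set.Icc (-γ) γ, mixtureLaplaceDensity μ x = 1 - mgf id μ (-γ) := calc
  ∫ x in Set.Icc (-γ) γ, mixtureLaplaceDensity μ x
    = ∫ ε, (∫ x in Set.Icc (-γ) γ, ε / 2 * exp (-(ε * |x|))) ∂μ :=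
    integral_integral_swap (integrable_laplace_density_prod hμ hγ)
  _ = ∫ ε, (1 - exp (-γ * ε)) ∂μ :=
    integral_congr_ae (.of_forall fun ε ↦ integral_Icc_laplace_density ε hγ)
  _ = 1 - mgf id μ (-γ) := by
    rw [integral_sub (integrable_const 1) (integrable_exp_neg_mul_of_ae_nonneg hμ hγ)]
    simp [mgf]

end Mixture

theorem ProbabilityTheory.iIndepFun.mgf_sum_const_mul {Ω ι : Type*} {mΩ : MeasurableSpace Ω}
    {P : Measure Ω} {X : ι → Ω → ℝ} (hX : iIndepFun X P) (hXmeas : ∀ i, Measurable (X i)) (a : ι → ℝ)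
    (s : Finset ι) (t : ℝ) :
    mgf (fun ω ↦ ∑ i ∈ s, a i * X i ω) P t = ∏ i ∈ s, mgf (X i) P (a i * t) := by
  have hindep : iIndepFun (fun i ω ↦ a i * X i ω) P :=
    hX.comp (fun i x ↦ a i * x) fun i ↦ measurable_const_mul _
  simpa only [Finset.sum_fn, mgf_const_mul] using
    hindep.mgf_sum (fun i ↦ (hXmeas i).const_mul (a i)) s (t := t)

/-- Usefulness of a Randomized DP Laplace mechanism whose reciprocal scale `1/b` is a
linear combination `Y = ∑ aᵢ·Xᵢ` of independent positive random variables: for every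
`γ > 0`, `∫_{−γ}^{γ} g = 1 − ∏ᵢ M_{Xᵢ}(−aᵢγ)`. -/
theorem mixture_laplace_linear_combination_usefulness
    {Ω : Type*} [MeasureSpace Ω] [IsProbabilityMeasure (ℙ : Measure Ω)]
    (n : ℕ) (X : Fin n → Ω → ℝ)
    (hXmeas : ∀ i, Measurable (X i))
    (hXindep : iIndepFun X ℙ)
    (hXpos : ∀ i, ∀ᵐ ω ∂(ℙ : Measure Ω), 0 < X i ω)
    (a : Fin n → ℝ) (ha : ∀ i, 0 < a i)
    (M : Fin n → ℝ → ℝ)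
    (hM : ∀ i, ∀ t : ℝ, M i t = ∫ ω, Real.exp (t * X i ω))
    (Y : Ω → ℝ) (hY : ∀ ω, Y ω = ∑ i, a i * X i ω)
    (μ : Measure ℝ) (hμ : μ = Measure.map Y ℙ)
    (g : ℝ → ℝ)
    (hg : ∀ x : ℝ, g x = ∫ ε, (ε / 2) * Real.exp (-(ε * |x|)) ∂μ)
    (γ : ℝ) (hγ : 0 < γ) :
    ∫ x in Set.Icc (-γ) γ, g x = 1 - ∏ i, M i (-(a i * γ)) := by
  obtain rfl : Y = fun ω ↦ ∑ i, a i * X i ω := funext hY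
  obtain rfl : g = mixtureLaplaceDensity μ := funext hg
  obtain rfl : M = fun i ↦ mgf (X i) ℙ := funext₂ hM
  have hYmeas : Measurable fun ω ↦ ∑ i, a i * X i ω := by fun_prop
  have hμ_nonneg : ∀ᵐ ε ∂μ, 0 ≤ ε := by
    rw [hμ, ae_map_iff hYmeas.aemeasurable measurableSet_Ici]
    filter_upwards [ae_all_iff.2 hXpos] with ω hω
    exact Finset.sum_nonneg fun i _ ↦ (mul_pos (ha i) (hω i)).le
  have : IsProbabilityMeasure μ := hμ ▸ Measure.isProbabilityMeasure_map hYmeas.aemeasurable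
  rw [integral_Icc_mixtureLaplaceDensity hμ_nonneg hγ.le, hμ, mgf_id_map hYmeas.aemeasurable,
    hXindep.mgf_sum_const_mul hXmeas]
  simp only [mul_neg]
end
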